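/- arXiv:2208.08471 — 3 statements merged into one kernel-verified Lean document; each statement's English description precedes it below -/
import Mathlib

section
/- Let ξ ≥ 1, β₁,…,βₙ > 0, and let Y₁,…,Yₙ be independent with Yᵢ following the generalized Pareto distribution G_{ξ,βᵢ}. Let Y follow G_{ξ,β} with β = ∑ᵢ βᵢ. Then Y ≤_st ∑ᵢ Yᵢ. -/
open MeasureTheory ProbabilityTheory Set

/-- `Y` follows the generalized Pareto distribution `G_{ξ,β}`:
`P(Y > x) = (1 + ξx/β)^{-1/ξ}` for `x ≥ 0`, and `Y ≥ 0` almost surely. -/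
def IsGPD {Ω : Type*} [MeasurableSpace Ω] (P : Measure Ω) (Y : Ω → ℝ) (ξ β : ℝ) : Prop :=
  Measurable Y ∧ P {ω | 0 ≤ Y ω} = 1 ∧
    ∀ x : ℝ, 0 ≤ x → P {ω | x < Y ω} = ENNReal.ofReal ((1 + ξ * x / β) ^ (-1/ξ))

/-!
In fact `Y ≤_st max Yᵢ`, and `max Yᵢ ≤ ∑ Yᵢ` since the `Yᵢ` are nonnegative. With `α = 1/ξ ≤ 1`,
`B = ∑ βᵢ` and `x = ξt`, independence reduces the claim to
`∏ᵢ (1 - (1 + x/βᵢ)^{-α}) ≤ 1 - (1 + x/B)^{-α}`. Each factor is at most `(1 - (1 + x/B)^{-α})^{βᵢ/B}`,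
which says that `x ↦ x log (1 - (1 + x)^{-α})` is antitone; its derivative is
`log (1 - y) + αxy / ((1 + x)(1 - y))` with `y = (1 + x)^{-α}`, which is `≤ -y + y` by
`log (1 - y) ≤ -y` and Bernoulli's inequality `αx/(1 + x) ≤ 1 - y`.
-/

open Real Finset

section ParetoInequality

variable {α : ℝ}

lemma one_add_rpow_neg_lt_one (hα : 0 < α) {x : ℝ} (hx : 0 < x) : (1 + x) ^ (-α) < 1 :=
  rpow_lt_one_of_one_lt_of_neg (by linarith) (by linarith)

lemma one_sub_one_add_rpow_neg_nonneg (hα : 0 ≤ α) {x : ℝ} (hx : 0 ≤ x) :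
    0 ≤ 1 - (1 + x) ^ (-α) :=
  sub_nonneg.2 (rpow_le_one_of_one_le_of_nonpos (by linarith) (by linarith))

lemma hasDerivAt_mul_log_one_sub_one_add_rpow_neg (hα : 0 < α) {x : ℝ} (hx : 0 < x) :
    HasDerivAt (fun x => x * log (1 - (1 + x) ^ (-α)))
      (log (1 - (1 + x) ^ (-α)) + x * (α * (1 + x) ^ (-α - 1) / (1 - (1 + x) ^ (-α)))) x := by
  have hpow : HasDerivAt (fun x => (1 + x) ^ (-α)) (-α * (1 + x) ^ (-α - 1)) x := by
    simpa using ((hasDerivAt_id' x).const_add 1).rpow_const (p := -α) (Or.inl (by linarith))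
  have hlog := (hpow.const_sub 1).log (sub_pos.2 (one_add_rpow_neg_lt_one hα hx)).ne'
  exact ((hasDerivAt_id' x).fun_mul hlog).congr_deriv (by ring)

lemma log_one_sub_one_add_rpow_neg_add_le_zero (hα : 0 < α) (hα1 : α ≤ 1) {x : ℝ} (hx : 0 < x) :
    log (1 - (1 + x) ^ (-α)) + x * (α * (1 + x) ^ (-α - 1) / (1 - (1 + x) ^ (-α))) ≤ 0 := by
  have hx1 : 0 < 1 + x := by linarith
  set y := (1 + x) ^ (-α) with hy
  have hy1 : 0 < 1 - y := sub_pos.2 (one_add_rpow_neg_lt_one hα hx)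
  have hy0 : 0 < y := rpow_pos_of_pos hx1 _
  have hlog : log (1 - y) ≤ -y := by linarith [log_le_sub_one_of_pos hy1]
  have hbernoulli : α * x / (1 + x) ≤ 1 - y := by
    have hs : -1 ≤ -x / (1 + x) := by rw [le_div_iff₀ hx1]; linarith
    have h := rpow_one_add_le_one_add_mul_self hs hα.le hα1
    have hbase : 1 + -x / (1 + x) = (1 + x)⁻¹ := by field_simp; ring
    rw [hbase, inv_rpow hx1.le, ← rpow_neg hx1.le] at h
    have : α * (-x / (1 + x)) = -(α * x / (1 + x)) := by ring
    linarith
  have hpow : (1 + x) ^ (-α - 1) = y / (1 + x) := by rw [hy, rpow_sub_one hx1.ne']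
  have hfrac : x * (α * (1 + x) ^ (-α - 1) / (1 - y)) ≤ y := by
    rw [hpow, ← mul_div_assoc, div_le_iff₀ hy1]
    calc x * (α * (y / (1 + x))) = α * x / (1 + x) * y := by ring
      _ ≤ (1 - y) * y := mul_le_mul_of_nonneg_right hbernoulli hy0.le
      _ = y * (1 - y) := mul_comm _ _
  linarith

lemma antitoneOn_mul_log_one_sub_one_add_rpow_neg (hα : 0 < α) (hα1 : α ≤ 1) :
    AntitoneOn (fun x => x * log (1 - (1 + x) ^ (-α))) (Ioi 0) := by
  refine antitoneOn_of_hasDerivWithinAt_nonpos (f' := fun x =>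
      log (1 - (1 + x) ^ (-α)) + x * (α * (1 + x) ^ (-α - 1) / (1 - (1 + x) ^ (-α))))
    (convex_Ioi 0)
    (fun x hx => (hasDerivAt_mul_log_one_sub_one_add_rpow_neg hα hx).continuousAt
      |>.continuousWithinAt) (fun x hx => ?_) (fun x hx => ?_)
  · rw [interior_Ioi] at hx
    exact (hasDerivAt_mul_log_one_sub_one_add_rpow_neg hα hx).hasDerivWithinAt
  · rw [interior_Ioi] at hx
    exact log_one_sub_one_add_rpow_neg_add_le_zero hα hα1 hx

lemma one_sub_one_add_div_rpow_neg_le (hα : 0 < α) (hα1 : α ≤ 1) {x b B : ℝ} (hx : 0 ≤ x)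
    (hb : 0 < b) (hbB : b ≤ B) :
    1 - (1 + x / b) ^ (-α) ≤ (1 - (1 + x / B) ^ (-α)) ^ (b / B) := by
  have hB : 0 < B := hb.trans_le hbB
  rcases hx.eq_or_lt with rfl | hx
  · simp [zero_rpow (div_pos hb hB).ne']
  have hanti := antitoneOn_mul_log_one_sub_one_add_rpow_neg hα hα1 (div_pos hx hB)
    (div_pos hx hb) (div_le_div_of_nonneg_left hx.le hb hbB)
  simp only at hanti
  rw [le_rpow_iff_log_le (sub_pos.2 (one_add_rpow_neg_lt_one hα (div_pos hx hb)))
    (sub_pos.2 (one_add_rpow_neg_lt_one hα (div_pos hx hB)))]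
  calc log (1 - (1 + x / b) ^ (-α)) = b / x * (x / b * log (1 - (1 + x / b) ^ (-α))) := by
        field_simp
    _ ≤ b / x * (x / B * log (1 - (1 + x / B) ^ (-α))) :=
        mul_le_mul_of_nonneg_left hanti (div_pos hb hx).le
    _ = b / B * log (1 - (1 + x / B) ^ (-α)) := by field_simp

lemma prod_one_sub_one_add_div_rpow_neg_le {ι : Type*} [Fintype ι] [Nonempty ι] (hα : 0 < α)
    (hα1 : α ≤ 1) {x : ℝ} (hx : 0 ≤ x) {β : ι → ℝ} (hβ : ∀ i, 0 < β i) :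
    ∏ i, (1 - (1 + x / β i) ^ (-α)) ≤ 1 - (1 + x / ∑ i, β i) ^ (-α) := by
  set B := ∑ i, β i
  have hB : 0 < B := sum_pos (fun i _ => hβ i) univ_nonempty
  have hC := one_sub_one_add_rpow_neg_nonneg hα.le (div_nonneg hx hB.le)
  calc ∏ i, (1 - (1 + x / β i) ^ (-α)) ≤ ∏ i, (1 - (1 + x / B) ^ (-α)) ^ (β i / B) :=
        prod_le_prod (fun i _ => one_sub_one_add_rpow_neg_nonneg hα.le (div_nonneg hx (hβ i).le))
          fun i _ => one_sub_one_add_div_rpow_neg_le hα hα1 hx (hβ i)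
            (single_le_sum (fun j _ => (hβ j).le) (mem_univ i))
    _ = (1 - (1 + x / B) ^ (-α)) ^ (∑ i, β i / B) :=
        (rpow_sum_of_nonneg hC fun i _ => (div_pos (hβ i) hB).le).symm
    _ = 1 - (1 + x / B) ^ (-α) := by rw [← sum_div, div_self hB.ne', rpow_one]

end ParetoInequality

section Probability

variable {Ω : Type*} [MeasurableSpace Ω] {P : Measure Ω}

lemma measure_lt_le_measure_lt_of_measure_le_le [IsProbabilityMeasure P] {X Y : Ω → ℝ}
    (hX : Measurable X) (hY : Measurable Y) {t : ℝ}
    (h : P {ω | Y ω ≤ t} ≤ P {ω | X ω ≤ t}) : P {ω | t < X ω} ≤ P {ω | t < Y ω} := by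
  have hcompl : ∀ Z : Ω → ℝ, {ω | t < Z ω} = {ω | Z ω ≤ t}ᶜ := fun Z => by ext; simp
  rw [hcompl, hcompl, prob_compl_eq_one_sub (measurableSet_le hX measurable_const),
    prob_compl_eq_one_sub (measurableSet_le hY measurable_const)]
  exact tsub_le_tsub_left h 1

lemma ProbabilityTheory.iIndepFun.measure_forall_le_eq_prod {ι : Type*} [Fintype ι]
    {Xs : ι → Ω → ℝ} (h : iIndepFun Xs P) (t : ℝ) :
    P {ω | ∀ i, Xs i ω ≤ t} = ∏ i, P {ω | Xs i ω ≤ t} := by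
  convert h.measure_inter_preimage_eq_mul univ (sets := fun _ => Iic t)
    (fun _ _ => measurableSet_Iic) using 2
  · ext; simp
  · rfl

namespace IsGPD

variable [IsProbabilityMeasure P] {Y : Ω → ℝ} {ξ β : ℝ}

lemma ae_nonneg (h : IsGPD P Y ξ β) : ∀ᵐ ω ∂P, 0 ≤ Y ω :=
  (ae_iff_measure_eq (measurableSet_le measurable_const h.1).nullMeasurableSet).2
    (h.2.1.trans measure_univ.symm)

lemma measure_le_eq (h : IsGPD P Y ξ β) (hξ : 0 ≤ ξ) (hβ : 0 ≤ β) {x : ℝ} (hx : 0 ≤ x) :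
    P {ω | Y ω ≤ x} = ENNReal.ofReal (1 - (1 + ξ * x / β) ^ (-1/ξ)) := by
  have hcompl : {ω | Y ω ≤ x} = {ω | x < Y ω}ᶜ := by ext; simp
  rw [hcompl, prob_compl_eq_one_sub (measurableSet_lt measurable_const h.1), h.2.2 x hx,
    ← ENNReal.ofReal_one, ← ENNReal.ofReal_sub _ (rpow_nonneg (by positivity) _)]

/-- With `β = 0` the tail `(1 + ξx/0)^{-1/ξ}` is the junk value `1` for every `x`. -/
lemma scale_ne_zero (h : IsGPD P Y ξ β) : β ≠ 0 := by
  rintro rfl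
  have hall : ∀ᵐ ω ∂P, ∀ k : ℕ, (k : ℝ) < Y ω := ae_all_iff.2 fun k => by
    refine (ae_iff_measure_eq (measurableSet_lt measurable_const h.1).nullMeasurableSet).2 ?_
    rw [h.2.2 k k.cast_nonneg, div_zero, add_zero, one_rpow, ENNReal.ofReal_one, measure_univ]
  obtain ⟨ω, hω⟩ := hall.exists
  obtain ⟨k, hk⟩ := exists_nat_gt (Y ω)
  exact lt_asymm hk (hω k)

end IsGPD

end Probability

/-- For `ξ ≥ 1` and independent generalized Pareto losses `Yᵢ ~ G_{ξ,βᵢ}`, a variable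
`Y ~ G_{ξ,β}` with `β = ∑ βᵢ` satisfies `Y ≤_st ∑ Yᵢ`. -/
theorem stmt16 {Ω : Type*} [MeasurableSpace Ω] (P : Measure Ω) [IsProbabilityMeasure P]
    (n : ℕ) (ξ : ℝ) (hξ : 1 ≤ ξ) (β : Fin n → ℝ) (hβ : ∀ i, 0 < β i)
    (Ys : Fin n → Ω → ℝ) (hYs : ∀ i, IsGPD P (Ys i) ξ (β i))
    (hind : iIndepFun Ys P)
    (Y : Ω → ℝ) (hY : IsGPD P Y ξ (∑ i, β i)) :
    ∀ t : ℝ, P {ω | t < Y ω} ≤ P {ω | t < ∑ i, Ys i ω} := by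
  intro t
  obtain hn | hn := isEmpty_or_nonempty (Fin n)
  · exact (hY.scale_ne_zero (by simp)).elim
  have hξ0 : 0 < ξ := one_pos.trans_le hξ
  have hnonneg : ∀ᵐ ω ∂P, ∀ i, 0 ≤ Ys i ω := ae_all_iff.2 fun i => (hYs i).ae_nonneg
  refine measure_lt_le_measure_lt_of_measure_le_le hY.1
    (Finset.measurable_sum _ fun i _ => (hYs i).1) ?_
  rcases lt_or_ge t 0 with ht | ht
  · refine le_of_eq_of_le (measure_eq_zero_iff_ae_notMem.2 ?_) zero_le
    filter_upwards [hnonneg] with ω hω hsum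
    exact (sum_nonneg fun i _ => hω i).not_gt (hsum.trans_lt ht)
  calc P {ω | ∑ i, Ys i ω ≤ t} ≤ P {ω | ∀ i, Ys i ω ≤ t} := measure_mono_ae <|
        hnonneg.mono fun ω hω hsum i =>
          (single_le_sum (fun j _ => hω j) (mem_univ i)).trans hsum
    _ = ENNReal.ofReal (∏ i, (1 - (1 + ξ * t / β i) ^ (-1/ξ))) := by
        rw [hind.measure_forall_le_eq_prod, ENNReal.ofReal_prod_of_nonneg]
        · exact prod_congr rfl fun i _ => (hYs i).measure_le_eq hξ0.le (hβ i).le ht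
        · simp only [neg_div]
          exact fun i _ => one_sub_one_add_rpow_neg_nonneg (by positivity)
            (div_nonneg (by positivity) (hβ i).le)
    _ ≤ ENNReal.ofReal (1 - (1 + ξ * t / ∑ i, β i) ^ (-1/ξ)) := by
        simp only [neg_div]
        exact ENNReal.ofReal_le_ofReal <| prod_one_sub_one_add_div_rpow_neg_le (by positivity)
          ((div_le_one hξ0).2 hξ) (by positivity) hβ
    _ = P {ω | Y ω ≤ t} :=
        (hY.measure_le_eq hξ0.le (sum_pos (fun i _ => hβ i) univ_nonempty).le ht).symm
end

section
/- Let X ~ Pareto(α) with α ∈ (0,1] and let c > 1. Then min(X₁, c) ≤_st min(∑ᵢ θᵢXᵢ, c) for iid Pareto(α) variables X₁,…,Xₙ and weights (θ₁,…,θₙ) in the simplex; moreover, for any strictly increasing continuous function v on [1,c], 𝔼[v(min(X₁,c))] < 𝔼[v(min(∑ᵢθᵢXᵢ, c))] when at least two θᵢ > 0. -/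
open MeasureTheory ProbabilityTheory Set

/-- `X` is a Pareto(α) random variable under `P`: `P(X > t) = t^{-α}` for `t ≥ 1`,
and `X ≥ 1` almost surely. -/
def IsPareto {Ω : Type*} [MeasurableSpace Ω] (P : Measure Ω) (X : Ω → ℝ) (α : ℝ) : Prop :=
  Measurable X ∧ P {ω | 1 ≤ X ω} = 1 ∧
    ∀ t : ℝ, 1 ≤ t → P {ω | t < X ω} = ENNReal.ofReal (t ^ (-α))

/-!
Put `s = t - 1`. Since every `Xⱼ ≥ 1` and `∑ θⱼ = 1`, the event `∑ θⱼ Xⱼ ≤ 1 + s` forces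
`θᵢ Xᵢ ≤ θᵢ + s` for each `i`, so by independence `P(∑ θⱼ Xⱼ ≤ t) ≤ ∏ G(θᵢ)`, where
`G(x) = P(x X ≤ x + s) = 1 - (x / (x + s))^α`. For `α ≤ 1` the concavity of `x ↦ x^α` makes `G`
supermultiplicative, `G(a) G(b) ≤ G(a + b)`, strictly when `s, a, b > 0`; hence
`∏ G(θᵢ) ≤ G(1) = P(X₁ ≤ t)`. Truncation at `c` keeps the order of the tails. For the expectations,
the intermediate value theorem turns each level set `{v(W) > v(1) + u}` into a tail event `{W > q}`
with `q ∈ (1, c)`, and the layer-cake formula converts the strict order of tails into a strict order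
of integrals.
-/

theorem ConcaveOn.sub_le_sub_of_le {f : ℝ → ℝ} {s : Set ℝ} (hf : ConcaveOn ℝ s f)
    {x y d : ℝ} (hx : x ∈ s) (hxd : x + d ∈ s) (hy : y ∈ s) (hyd : y + d ∈ s)
    (hxy : x ≤ y) (hd : 0 ≤ d) :
    f (y + d) - f y ≤ f (x + d) - f x := by
  rcases hd.eq_or_lt with rfl | hd
  · simp
  have h₁ : slope f x (y + d) ≤ slope f x (x + d) :=
    hf.slope_anti hx ⟨hxd, by simp [hd.ne']⟩ ⟨hyd, by simp; linarith⟩ (by linarith)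
  have h₂ : slope f (y + d) y ≤ slope f (y + d) x :=
    hf.slope_anti hyd ⟨hx, by simp; linarith⟩ ⟨hy, by simp [hd.ne']⟩ hxy
  have h := h₂.trans (slope_comm f (y + d) x ▸ h₁)
  rw [slope_def_field, slope_def_field, add_sub_cancel_left, show y - (y + d) = -d by ring,
    div_neg, ← neg_div, neg_sub] at h
  exact (div_le_div_iff_of_pos_right hd).mp h

theorem Real.one_sub_rpow_mul_one_sub_rpow_le {α u v : ℝ} (hα0 : 0 ≤ α) (hα1 : α ≤ 1)
    (hu0 : 0 ≤ u) (hu1 : u ≤ 1) (hv0 : 0 ≤ v) (hv1 : v ≤ 1) :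
    (1 - u ^ α) * (1 - v ^ α) ≤ 1 - (u + v - u * v) ^ α := by
  have key := (Real.concaveOn_rpow hα0 hα1).sub_le_sub_of_le (x := u * v) (y := v)
    (d := u * (1 - v)) (mem_Ici.2 (by positivity)) (mem_Ici.2 (by nlinarith))
    (mem_Ici.2 hv0) (mem_Ici.2 (by nlinarith)) (by nlinarith) (by nlinarith)
  rw [show u * v + u * (1 - v) = u by ring, show v + u * (1 - v) = u + v - u * v by ring,
    Real.mul_rpow hu0 hv0] at key
  linarith

noncomputable def paretoScaledCdf (α s x : ℝ) : ℝ := 1 - (x / (x + s)) ^ α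

section paretoScaledCdf

variable {α s : ℝ}

theorem paretoScaledCdf_zero (hα : α ≠ 0) : paretoScaledCdf α s 0 = 1 := by
  simp [paretoScaledCdf, Real.zero_rpow hα]

theorem paretoScaledCdf_nonneg (hα : 0 ≤ α) (hs : 0 ≤ s) {x : ℝ} (hx : 0 ≤ x) :
    0 ≤ paretoScaledCdf α s x :=
  sub_nonneg.2 <|
    Real.rpow_le_one (by positivity) (div_le_one_of_le₀ (by linarith) (by positivity)) hα

theorem paretoScaledCdf_one (hs : 0 ≤ s) : paretoScaledCdf α s 1 = 1 - (1 + s) ^ (-α) := by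
  rw [paretoScaledCdf, Real.rpow_neg (by positivity), ← Real.inv_rpow (by positivity), one_div]

theorem paretoScaledCdf_mul_le_one_sub_rpow (hα0 : 0 ≤ α) (hα1 : α ≤ 1) (hs : 0 ≤ s)
    {a b : ℝ} (ha : 0 < a) (hb : 0 < b) :
    paretoScaledCdf α s a * paretoScaledCdf α s b
      ≤ 1 - ((a + b) / (a + b + s) + s * a * b / ((a + s) * (b + s) * (a + b + s))) ^ α := by
  have h : (a + b) / (a + b + s) + s * a * b / ((a + s) * (b + s) * (a + b + s))
      = a / (a + s) + b / (b + s) - a / (a + s) * (b / (b + s)) := by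
    field_simp
    ring
  rw [h]
  exact Real.one_sub_rpow_mul_one_sub_rpow_le hα0 hα1 (by positivity)
    (div_le_one_of_le₀ (by linarith) (by positivity)) (by positivity)
    (div_le_one_of_le₀ (by linarith) (by positivity))

theorem paretoScaledCdf_mul_le_add (hα0 : 0 < α) (hα1 : α ≤ 1) (hs : 0 ≤ s)
    {a b : ℝ} (ha : 0 ≤ a) (hb : 0 ≤ b) :
    paretoScaledCdf α s a * paretoScaledCdf α s b ≤ paretoScaledCdf α s (a + b) := by
  rcases ha.eq_or_lt with rfl | ha
  · simp [paretoScaledCdf_zero hα0.ne']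
  rcases hb.eq_or_lt with rfl | hb
  · simp [paretoScaledCdf_zero hα0.ne']
  refine (paretoScaledCdf_mul_le_one_sub_rpow hα0.le hα1 hs ha hb).trans ?_
  rw [paretoScaledCdf, add_assoc a b s]
  gcongr
  exact le_add_of_nonneg_right (by positivity)

theorem paretoScaledCdf_mul_lt_add (hα0 : 0 < α) (hα1 : α ≤ 1) (hs : 0 < s)
    {a b : ℝ} (ha : 0 < a) (hb : 0 < b) :
    paretoScaledCdf α s a * paretoScaledCdf α s b < paretoScaledCdf α s (a + b) := by
  refine (paretoScaledCdf_mul_le_one_sub_rpow hα0.le hα1 hs.le ha hb).trans_lt ?_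
  rw [paretoScaledCdf]
  gcongr
  exact lt_add_of_pos_right _ (by positivity)

theorem prod_paretoScaledCdf_le {ι : Type*} (hα0 : 0 < α) (hα1 : α ≤ 1) (hs : 0 ≤ s)
    (F : Finset ι) {θ : ι → ℝ} (hθ : ∀ i ∈ F, 0 ≤ θ i) :
    ∏ i ∈ F, paretoScaledCdf α s (θ i) ≤ paretoScaledCdf α s (∑ i ∈ F, θ i) := by
  induction F using Finset.cons_induction with
  | empty => simp [paretoScaledCdf_zero hα0.ne']
  | cons i F _ ih =>
    rw [Finset.prod_cons, Finset.sum_cons]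
    have hθF : ∀ j ∈ F, 0 ≤ θ j := fun j hj => hθ j (Finset.mem_cons_of_mem hj)
    calc paretoScaledCdf α s (θ i) * ∏ j ∈ F, paretoScaledCdf α s (θ j)
        ≤ paretoScaledCdf α s (θ i) * paretoScaledCdf α s (∑ j ∈ F, θ j) :=
          mul_le_mul_of_nonneg_left (ih hθF)
            (paretoScaledCdf_nonneg hα0.le hs (hθ i (Finset.mem_cons_self i F)))
      _ ≤ paretoScaledCdf α s (θ i + ∑ j ∈ F, θ j) :=
          paretoScaledCdf_mul_le_add hα0 hα1 hs (hθ i (Finset.mem_cons_self i F))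
            (Finset.sum_nonneg hθF)

theorem prod_paretoScaledCdf_lt {ι : Type*} (hα0 : 0 < α) (hα1 : α ≤ 1)
    (hs : 0 < s) {F : Finset ι} {θ : ι → ℝ} (hθ : ∀ i ∈ F, 0 ≤ θ i) {i j : ι} (hi : i ∈ F)
    (hj : j ∈ F) (hij : i ≠ j) (hθi : 0 < θ i) (hθj : 0 < θ j) :
    ∏ k ∈ F, paretoScaledCdf α s (θ k) < paretoScaledCdf α s (∑ k ∈ F, θ k) := by
  classical
  rw [← Finset.mul_prod_erase F _ hi, ← Finset.add_sum_erase F _ hi]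
  have hθE : ∀ k ∈ F.erase i, 0 ≤ θ k := fun k hk => hθ k (Finset.mem_of_mem_erase hk)
  have hrest : 0 < ∑ k ∈ F.erase i, θ k :=
    hθj.trans_le (Finset.single_le_sum hθE (Finset.mem_erase.2 ⟨hij.symm, hj⟩))
  calc paretoScaledCdf α s (θ i) * ∏ k ∈ F.erase i, paretoScaledCdf α s (θ k)
      ≤ paretoScaledCdf α s (θ i) * paretoScaledCdf α s (∑ k ∈ F.erase i, θ k) :=
        mul_le_mul_of_nonneg_left (prod_paretoScaledCdf_le hα0 hα1 hs.le _ hθE)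
          (paretoScaledCdf_nonneg hα0.le hs.le hθi.le)
    _ < paretoScaledCdf α s (θ i + ∑ k ∈ F.erase i, θ k) :=
        paretoScaledCdf_mul_lt_add hα0 hα1 hs hθi hrest

end paretoScaledCdf

theorem le_add_of_sum_mul_le {ι : Type*} [Fintype ι] {θ x : ι → ℝ} {s : ℝ}
    (hθ : ∀ i, 0 ≤ θ i) (hsum : ∑ i, θ i = 1) (hx : ∀ i, 1 ≤ x i)
    (h : ∑ i, θ i * x i ≤ 1 + s) (i : ι) : θ i * x i ≤ θ i + s := by
  have hexcess : θ i * (x i - 1) ≤ ∑ j, θ j * (x j - 1) :=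
    Finset.single_le_sum (fun j _ => mul_nonneg (hθ j) (sub_nonneg.2 (hx j))) (Finset.mem_univ i)
  simp only [mul_sub, mul_one, Finset.sum_sub_distrib, hsum] at hexcess
  linarith

namespace IsPareto

variable {Ω : Type*} [MeasurableSpace Ω] {P : Measure Ω} [IsProbabilityMeasure P] {X : Ω → ℝ}
  {α : ℝ}

theorem ae_one_le (hX : IsPareto P X α) : ∀ᵐ ω ∂P, 1 ≤ X ω := by
  rw [ae_iff_measure_eq (measurableSet_le measurable_const hX.1).nullMeasurableSet, hX.2.1,
    measure_univ]

theorem measureReal_mul_le (hX : IsPareto P X α) (hα : α ≠ 0) {s x : ℝ} (hs : 0 ≤ s)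
    (hx : 0 ≤ x) : P.real {ω | x * X ω ≤ x + s} = paretoScaledCdf α s x := by
  rcases hx.eq_or_lt with rfl | hx
  · simp [hs, paretoScaledCdf_zero hα]
  have hset : {ω | x * X ω ≤ x + s} = {ω | (x + s) / x < X ω}ᶜ := by
    ext ω
    simp [le_div_iff₀ hx, mul_comm]
  have hlevel : 1 ≤ (x + s) / x := (one_le_div hx).2 (by linarith)
  rw [hset, probReal_compl_eq_one_sub (measurableSet_lt measurable_const hX.1), measureReal_def,
    hX.2.2 _ hlevel, ENNReal.toReal_ofReal (by positivity), paretoScaledCdf,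
    Real.rpow_neg (by positivity), ← Real.inv_rpow (by positivity), inv_div]

end IsPareto

section WeightedSum

variable {Ω : Type*} [MeasurableSpace Ω] {P : Measure Ω} [IsProbabilityMeasure P]
  {ι : Type*} [Fintype ι] {X : ι → Ω → ℝ} {α : ℝ} {θ : ι → ℝ}

theorem ae_one_le_sum_mul (hX : ∀ i, IsPareto P (X i) α) (hθ : ∀ i, 0 ≤ θ i)
    (hsum : ∑ i, θ i = 1) : ∀ᵐ ω ∂P, 1 ≤ ∑ i, θ i * X i ω := by
  filter_upwards [ae_all_iff.2 fun i => (hX i).ae_one_le] with ω hω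
  calc (1 : ℝ) = ∑ i, θ i := hsum.symm
    _ ≤ ∑ i, θ i * X i ω := Finset.sum_le_sum fun i _ => le_mul_of_one_le_right (hθ i) (hω i)

theorem measureReal_sum_mul_le_le_prod (hX : ∀ i, IsPareto P (X i) α) (hα : α ≠ 0)
    (hind : iIndepFun X P) (hθ : ∀ i, 0 ≤ θ i) (hsum : ∑ i, θ i = 1) {s : ℝ} (hs : 0 ≤ s) :
    P.real {ω | ∑ i, θ i * X i ω ≤ 1 + s} ≤ ∏ i, paretoScaledCdf α s (θ i) := by
  have hsub : {ω | ∑ i, θ i * X i ω ≤ 1 + s} ≤ᵐ[P] ⋂ i, X i ⁻¹' {x | θ i * x ≤ θ i + s} := by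
    filter_upwards [ae_all_iff.2 fun i => (hX i).ae_one_le] with ω hω h
    exact mem_iInter.2 (le_add_of_sum_mul_le hθ hsum hω h)
  have hprod : P.real (⋂ i, X i ⁻¹' {x | θ i * x ≤ θ i + s})
      = ∏ i, P.real (X i ⁻¹' {x | θ i * x ≤ θ i + s}) := by
    rw [measureReal_def,
      hind.meas_iInter fun i => ⟨_, measurableSet_le (by fun_prop) (by fun_prop), rfl⟩,
      ENNReal.toReal_prod]
    rfl
  calc P.real {ω | ∑ i, θ i * X i ω ≤ 1 + s}
      ≤ P.real (⋂ i, X i ⁻¹' {x | θ i * x ≤ θ i + s}) :=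
        ENNReal.toReal_mono (measure_ne_top _ _) (measure_mono_ae hsub)
    _ = ∏ i, paretoScaledCdf α s (θ i) := by
      rw [hprod]
      exact Finset.prod_congr rfl fun i _ => (hX i).measureReal_mul_le hα hs (hθ i)

theorem one_sub_prod_le_measureReal_lt_sum_mul (hX : ∀ i, IsPareto P (X i) α) (hα : α ≠ 0)
    (hind : iIndepFun X P) (hθ : ∀ i, 0 ≤ θ i) (hsum : ∑ i, θ i = 1) {s : ℝ} (hs : 0 ≤ s) :
    1 - ∏ i, paretoScaledCdf α s (θ i) ≤ P.real {ω | 1 + s < ∑ i, θ i * X i ω} := by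
  have hmeas : Measurable fun ω => ∑ i, θ i * X i ω := by
    have hXm := fun i => (hX i).1
    fun_prop
  have hcompl : {ω | 1 + s < ∑ i, θ i * X i ω} = {ω | ∑ i, θ i * X i ω ≤ 1 + s}ᶜ := by
    ext ω
    simp
  rw [hcompl, probReal_compl_eq_one_sub (measurableSet_le hmeas measurable_const)]
  linarith [measureReal_sum_mul_le_le_prod hX hα hind hθ hsum hs]

theorem measure_lt_le_measure_lt_sum_mul (hX : ∀ i, IsPareto P (X i) α) (hα : α ∈ Ioc 0 1)
    (hind : iIndepFun X P) (hθ : ∀ i, 0 ≤ θ i) (hsum : ∑ i, θ i = 1) (i₀ : ι) (t : ℝ) :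
    P {ω | t < X i₀ ω} ≤ P {ω | t < ∑ i, θ i * X i ω} := by
  rcases lt_or_ge t 1 with ht | ht
  · calc P {ω | t < X i₀ ω} ≤ P univ := measure_mono (subset_univ _)
      _ ≤ P {ω | t < ∑ i, θ i * X i ω} := measure_mono_ae <| by
        filter_upwards [ae_one_le_sum_mul hX hθ hsum] with ω hω _ using ht.trans_le hω
  obtain ⟨s, hs, rfl⟩ : ∃ s, 0 ≤ s ∧ t = 1 + s := ⟨t - 1, by linarith, by ring⟩
  have hprod := prod_paretoScaledCdf_le hα.1 hα.2 hs Finset.univ fun i _ => hθ i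
  rw [hsum, paretoScaledCdf_one hs] at hprod
  rw [(hX i₀).2.2 _ ht, ← ofReal_measureReal]
  exact ENNReal.ofReal_le_ofReal <| by
    linarith [one_sub_prod_le_measureReal_lt_sum_mul hX hα.1.ne' hind hθ hsum hs]

theorem measure_lt_lt_measure_lt_sum_mul (hX : ∀ i, IsPareto P (X i) α)
    (hα : α ∈ Ioc 0 1) (hind : iIndepFun X P) (hθ : ∀ i, 0 ≤ θ i) (hsum : ∑ i, θ i = 1)
    {i j : ι} (hij : i ≠ j) (hθi : 0 < θ i) (hθj : 0 < θ j) (i₀ : ι) {t : ℝ} (ht : 1 < t) :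
    P {ω | t < X i₀ ω} < P {ω | t < ∑ i, θ i * X i ω} := by
  obtain ⟨s, hs, rfl⟩ : ∃ s, 0 < s ∧ t = 1 + s := ⟨t - 1, by linarith, by ring⟩
  have hprod := prod_paretoScaledCdf_lt hα.1 hα.2 hs (fun i _ => hθ i) (Finset.mem_univ i)
    (Finset.mem_univ j) hij hθi hθj
  rw [hsum, paretoScaledCdf_one hs.le] at hprod
  rw [(hX i₀).2.2 _ ht.le, ← ofReal_measureReal]
  exact (ENNReal.ofReal_lt_ofReal_iff_of_nonneg (by positivity)).2 <| by
    linarith [one_sub_prod_le_measureReal_lt_sum_mul hX hα.1.ne' hind hθ hsum hs.le]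

end WeightedSum

section Tails

variable {Ω : Type*} [MeasurableSpace Ω] {μ : Measure Ω}

theorem integral_lt_integral_of_measure_lt {Y₁ Y₂ : Ω → ℝ} (hY₁ : Integrable Y₁ μ)
    (hY₂ : Integrable Y₂ μ) (h₁ : 0 ≤ᵐ[μ] Y₁) (h₂ : 0 ≤ᵐ[μ] Y₂)
    (hle : ∀ u > 0, μ {ω | u < Y₁ ω} ≤ μ {ω | u < Y₂ ω}) {M : ℝ} (hM : 0 < M)
    (hlt : ∀ u ∈ Ioo 0 M, μ {ω | u < Y₁ ω} < μ {ω | u < Y₂ ω}) :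
    ∫ ω, Y₁ ω ∂μ < ∫ ω, Y₂ ω ∂μ := by
  rw [integral_eq_lintegral_of_nonneg_ae h₁ hY₁.aestronglyMeasurable,
    integral_eq_lintegral_of_nonneg_ae h₂ hY₂.aestronglyMeasurable]
  refine ENNReal.toReal_strict_mono hY₂.lintegral_lt_top.ne ?_
  have hY₁fin := hY₁.lintegral_lt_top.ne
  rw [lintegral_eq_lintegral_meas_lt μ h₁ hY₁.aemeasurable] at hY₁fin ⊢
  rw [lintegral_eq_lintegral_meas_lt μ h₂ hY₂.aemeasurable]
  have hanti : Antitone fun u => μ {ω | u < Y₂ ω} :=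
    fun _ _ huv => measure_mono fun _ h => huv.trans_lt h
  refine lintegral_strict_mono_of_ae_le_of_ae_lt_on hanti.measurable.aemeasurable hY₁fin
    ((ae_restrict_iff' measurableSet_Ioi).2 (.of_forall hle)) (s := Ioo 0 M) ?_
    (.of_forall hlt)
  rw [Measure.restrict_apply measurableSet_Ioo, Ioo_inter_Ioi, max_self, Real.volume_Ioo]
  simpa using hM

theorem MonotoneOn.integrable_comp [IsFiniteMeasure μ] {v : ℝ → ℝ} {a c : ℝ} (hac : a ≤ c)
    (hvm : Measurable v) (hv : MonotoneOn v (Icc a c)) {W : Ω → ℝ} (hW : Measurable W)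
    (hWac : ∀ᵐ ω ∂μ, W ω ∈ Icc a c) : Integrable (fun ω => v (W ω)) μ :=
  .of_bound (hvm.comp hW).aestronglyMeasurable (max |v a| |v c|) <| by
    filter_upwards [hWac] with ω hω
    exact abs_le_max_abs_abs (hv (left_mem_Icc.2 hac) hω hω.1) (hv hω (right_mem_Icc.2 hac) hω.2)

theorem StrictMonoOn.exists_lt_iff_lt {v : ℝ → ℝ} {a c : ℝ} (hac : a ≤ c)
    (hv : StrictMonoOn v (Icc a c)) (hvc : ContinuousOn v (Icc a c)) {y : ℝ}
    (hy : y ∈ Ioo (v a) (v c)) : ∃ q ∈ Ioo a c, ∀ x ∈ Icc a c, y < v x ↔ q < x := by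
  obtain ⟨q, hq, rfl⟩ := intermediate_value_Ioo hac hvc hy
  exact ⟨q, hq, fun x hx => hv.lt_iff_lt (Ioo_subset_Icc_self hq) hx⟩

theorem StrictMonoOn.integral_comp_lt_integral_comp [IsFiniteMeasure μ] {v : ℝ → ℝ} {a c : ℝ}
    (hac : a < c) (hvm : Measurable v) (hv : StrictMonoOn v (Icc a c))
    (hvc : ContinuousOn v (Icc a c)) {W₁ W₂ : Ω → ℝ} (hW₁ : Measurable W₁) (hW₂ : Measurable W₂)
    (h₁ : ∀ᵐ ω ∂μ, W₁ ω ∈ Icc a c) (h₂ : ∀ᵐ ω ∂μ, W₂ ω ∈ Icc a c)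
    (hlt : ∀ q ∈ Ioo a c, μ {ω | q < W₁ ω} < μ {ω | q < W₂ ω}) :
    ∫ ω, v (W₁ ω) ∂μ < ∫ ω, v (W₂ ω) ∂μ := by
  have ha : a ∈ Icc a c := left_mem_Icc.2 hac.le
  have hc : c ∈ Icc a c := right_mem_Icc.2 hac.le
  have hI₁ := hv.monotoneOn.integrable_comp hac.le hvm hW₁ h₁
  have hI₂ := hv.monotoneOn.integrable_comp hac.le hvm hW₂ h₂
  have hnonneg : ∀ W : Ω → ℝ, (∀ᵐ ω ∂μ, W ω ∈ Icc a c) → 0 ≤ᵐ[μ] fun ω => v (W ω) - v a :=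
    fun W hWac => by
      filter_upwards [hWac] with ω hω
      exact sub_nonneg.2 (hv.monotoneOn ha hω hω.1)
  have hstrict : ∀ u ∈ Ioo 0 (v c - v a),
      μ {ω | u < v (W₁ ω) - v a} < μ {ω | u < v (W₂ ω) - v a} := by
    intro u hu
    obtain ⟨q, hq, hiff⟩ := hv.exists_lt_iff_lt hac.le hvc (y := v a + u)
      ⟨by linarith [hu.1], by linarith [hu.2]⟩
    have hset : ∀ W : Ω → ℝ, (∀ᵐ ω ∂μ, W ω ∈ Icc a c) →
        μ {ω | u < v (W ω) - v a} = μ {ω | q < W ω} := fun W hWac => measure_congr <| by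
      filter_upwards [hWac] with ω hω
      exact propext <| (lt_sub_iff_add_lt' ..).trans (hiff _ hω)
    rw [hset _ h₁, hset _ h₂]
    exact hlt q hq
  have hle : ∀ u > 0, μ {ω | u < v (W₁ ω) - v a} ≤ μ {ω | u < v (W₂ ω) - v a} := by
    intro u hu
    rcases lt_or_ge u (v c - v a) with hu' | hu'
    · exact (hstrict u ⟨hu, hu'⟩).le
    · have htop : μ {ω | u < v (W₁ ω) - v a} = 0 := by
        rw [measure_eq_zero_iff_ae_notMem]
        filter_upwards [h₁] with ω hω
        simpa using (sub_le_sub_right (hv.monotoneOn hω hc hω.2) _).trans hu'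
      simp [htop]
  have hsub := integral_lt_integral_of_measure_lt (Y₁ := fun ω => v (W₁ ω) - v a)
    (Y₂ := fun ω => v (W₂ ω) - v a) (hI₁.sub (integrable_const _)) (hI₂.sub (integrable_const _))
    (hnonneg _ h₁) (hnonneg _ h₂) hle (sub_pos.2 (hv ha hc hac)) hstrict
  rw [integral_sub hI₁ (integrable_const _), integral_sub hI₂ (integrable_const _)] at hsub
  linarith

end Tails

theorem setOf_lt_min_of_lt {Ω : Type*} {Y : Ω → ℝ} {t c : ℝ} (htc : t < c) :
    {ω | t < min (Y ω) c} = {ω | t < Y ω} := by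
  ext ω
  simp [htc]

theorem measure_lt_min_le_of_measure_lt_le {Ω : Type*} [MeasurableSpace Ω] {μ : Measure Ω}
    {Y₁ Y₂ : Ω → ℝ}
    (h : ∀ t, μ {ω | t < Y₁ ω} ≤ μ {ω | t < Y₂ ω}) (c t : ℝ) :
    μ {ω | t < min (Y₁ ω) c} ≤ μ {ω | t < min (Y₂ ω) c} := by
  rcases lt_or_ge t c with htc | htc
  · rw [setOf_lt_min_of_lt htc, setOf_lt_min_of_lt htc]
    exact h t
  · have hempty : {ω | t < min (Y₁ ω) c} = ∅ :=
      eq_empty_of_forall_notMem fun ω hω => (min_le_right _ c).not_gt (htc.trans_lt hω)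
    rw [hempty, measure_empty]
    exact zero_le

/-- Aggregate excess-of-loss capping: for iid Pareto(α), `α ∈ (0,1]`, simplex weights
and a cap `c > 1`, `min(X₁,c) ≤_st min(∑ θᵢXᵢ, c)`; moreover for every measurable
`v` strictly increasing and continuous on `[1,c]`, if at least two weights are positive
then `𝔼[v(min(X₁,c))] < 𝔼[v(min(∑ θᵢXᵢ, c))]`. -/
theorem stmt17 {Ω : Type*} [MeasurableSpace Ω] (P : Measure Ω) [IsProbabilityMeasure P]
    (n : ℕ) (hn : 0 < n) (α : ℝ) (hα : α ∈ Set.Ioc (0:ℝ) 1) (c : ℝ) (hc : 1 < c)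
    (X : Fin n → Ω → ℝ) (hX : ∀ i, IsPareto P (X i) α)
    (hind : iIndepFun X P)
    (θ : Fin n → ℝ) (hθ : ∀ i, 0 ≤ θ i) (hsum : ∑ i, θ i = 1) :
    (∀ t : ℝ, P {ω | t < min (X ⟨0, hn⟩ ω) c}
        ≤ P {ω | t < min (∑ i, θ i * X i ω) c})
    ∧ (∀ v : ℝ → ℝ, Measurable v → StrictMonoOn v (Set.Icc 1 c) →
        ContinuousOn v (Set.Icc 1 c) →
        (∃ i j, i ≠ j ∧ 0 < θ i ∧ 0 < θ j) →
        ∫ ω, v (min (X ⟨0, hn⟩ ω) c) ∂P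
          < ∫ ω, v (min (∑ i, θ i * X i ω) c) ∂P) := by
  refine ⟨measure_lt_min_le_of_measure_lt_le
    (measure_lt_le_measure_lt_sum_mul hX hα hind hθ hsum _) c, ?_⟩
  rintro v hvm hv hvc ⟨i, j, hij, hθi, hθj⟩
  have hXm := fun i => (hX i).1
  refine hv.integral_comp_lt_integral_comp hc hvm hvc (by fun_prop) (by fun_prop) ?_ ?_ ?_
  · filter_upwards [(hX ⟨0, hn⟩).ae_one_le] with ω hω
    exact ⟨le_min hω hc.le, min_le_right _ _⟩
  · filter_upwards [ae_one_le_sum_mul hX hθ hsum] with ω hω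
    exact ⟨le_min hω hc.le, min_le_right _ _⟩
  · intro q hq
    rw [setOf_lt_min_of_lt hq.2, setOf_lt_min_of_lt hq.2]
    exact measure_lt_lt_measure_lt_sum_mul hX hα hind hθ hsum hij hθi hθj _ hq.1
end

section
/- For p ∈ (0,1) and n ≥ 2, let X₁,…,Xₙ be iid Pareto(α), α ∈ (0,1], (θ₁,…,θₙ) in the simplex with all θᵢ > 0, and set cᵢ = VaR_p(∑_{j} θⱼXⱼ)/θᵢ for each i. Then VaR_p(∑ᵢ θᵢ·min(Xᵢ,cᵢ)) = VaR_p(∑ᵢ θᵢXᵢ) > ∑ᵢ θᵢ·VaR_p(min(Xᵢ,cᵢ)); i.e., a diversification penalty for VaR_p persists under per-loss capping at sufficiently high thresholds. -/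
open MeasureTheory ProbabilityTheory Set

/-- Value-at-Risk at level `p`: the left `p`-quantile. -/
noncomputable def VaR {Ω : Type*} [MeasurableSpace Ω] (P : Measure Ω) (Y : Ω → ℝ)
    (p : ℝ) : ℝ :=
  sInf {t : ℝ | ENNReal.ofReal p ≤ P {ω | Y ω ≤ t}}

/-! For `α ≤ 1` a weighted sum of independent Pareto(α) losses is strictly stochastically larger
than a single one: on `{∑ θᵢ Xᵢ ≤ q}` every `Xᵢ ≤ 1 + (q - 1)/θᵢ`, and the product of these Pareto
probabilities stays below `1 - q^{-α}` by a two-point majorization argument for the concave map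
`x ↦ x^α`. Taking `q = (1 - p)^{-1/α}`, the `p`-quantile of each `Xᵢ`, gives
`∑ θᵢ VaR_p(min(Xᵢ, cᵢ)) ≤ ∑ θᵢ VaR_p(Xᵢ) = q < VaR_p(∑ θᵢ Xᵢ)`.
Capping at `cᵢ = VaR_p(∑ θⱼ Xⱼ)/θᵢ` leaves the events `{∑ θᵢ min(Xᵢ, cᵢ) ≤ t}` unchanged for
`t ≤ VaR_p(∑ θⱼ Xⱼ)`, since a single capped coordinate already contributes that whole level and the
others add at least `1 - θᵢ > 0`; so both sums have the same `p`-quantile. -/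

open Filter Topology

theorem StieltjesFunction.csInf_setOf_le_le_iff (F : StieltjesFunction ℝ)
    (hbot : Tendsto F atBot (𝓝 0)) (htop : Tendsto F atTop (𝓝 1)) {p : ℝ} (hp0 : 0 < p)
    (hp1 : p < 1) (a : ℝ) :
    sInf {t | p ≤ F t} ≤ a ↔ p ≤ F a := by
  set M := {t | p ≤ F t}
  have hne : M.Nonempty := (htop.eventually (lt_mem_nhds hp1)).exists.imp fun _ h => h.le
  have hbdd : BddBelow M := by
    obtain ⟨b, hb⟩ := eventually_atBot.1 (hbot.eventually (gt_mem_nhds hp0))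
    exact ⟨b, fun t ht => le_of_not_gt fun htb => (hb t htb.le).not_ge ht⟩
  refine ⟨fun h => ?_, fun h => csInf_le hbdd h⟩
  have hmem : p ≤ F (sInf M) := by
    refine ge_of_tendsto ((F.right_continuous _).mono Ioi_subset_Ici_self) ?_
    filter_upwards [self_mem_nhdsWithin] with t ht
    obtain ⟨s, hs, hst⟩ := exists_lt_of_csInf_lt hne ht
    exact hs.trans (F.mono hst.le)
  exact hmem.trans (F.mono h)

section VaR

variable {Ω : Type*} [MeasurableSpace Ω] {P : Measure Ω} [IsProbabilityMeasure P]
  {Y Z : Ω → ℝ} {p : ℝ}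

theorem measure_le_eq_ofReal_cdf (hY : Measurable Y) (t : ℝ) :
    P {ω | Y ω ≤ t} = ENNReal.ofReal (cdf (P.map Y) t) := by
  have := Measure.isProbabilityMeasure_map (μ := P) hY.aemeasurable
  rw [ofReal_cdf, Measure.map_apply hY measurableSet_Iic]
  rfl

theorem VaR_le_iff (hY : Measurable Y) (hp0 : 0 < p) (hp1 : p < 1) {a : ℝ} :
    VaR P Y p ≤ a ↔ ENNReal.ofReal p ≤ P {ω | Y ω ≤ a} := by
  simp only [VaR, measure_le_eq_ofReal_cdf hY, ENNReal.ofReal_le_ofReal_iff (cdf_nonneg _ _)]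
  exact (cdf (P.map Y)).csInf_setOf_le_le_iff (tendsto_cdf_atBot _) (tendsto_cdf_atTop _) hp0 hp1 a

theorem ofReal_le_measure_le_VaR (hY : Measurable Y) (hp0 : 0 < p) (hp1 : p < 1) :
    ENNReal.ofReal p ≤ P {ω | Y ω ≤ VaR P Y p} :=
  (VaR_le_iff hY hp0 hp1).1 le_rfl

theorem VaR_mono (hY : Measurable Y) (hZ : Measurable Z) (hp0 : 0 < p) (hp1 : p < 1)
    (h : ∀ ω, Y ω ≤ Z ω) : VaR P Y p ≤ VaR P Z p :=
  (VaR_le_iff hY hp0 hp1).2 <| (ofReal_le_measure_le_VaR hZ hp0 hp1).trans <|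
    measure_mono fun _ hω => (h _).trans hω

theorem VaR_eq_of_measure_le_eq (hY : Measurable Y) (hZ : Measurable Z) (hp0 : 0 < p)
    (hp1 : p < 1) (h : ∀ t ≤ VaR P Z p, P {ω | Y ω ≤ t} = P {ω | Z ω ≤ t}) :
    VaR P Y p = VaR P Z p := by
  refine le_antisymm ((VaR_le_iff hY hp0 hp1).2 ?_) (not_lt.1 fun hlt => ?_)
  · rw [h _ le_rfl]
    exact ofReal_le_measure_le_VaR hZ hp0 hp1
  · refine hlt.not_ge ((VaR_le_iff hZ hp0 hp1).2 ?_)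
    rw [← h _ hlt.le]
    exact ofReal_le_measure_le_VaR hY hp0 hp1

end VaR

theorem ConcaveOn.map_add_map_le_of_add_eq {s : Set ℝ} {f : ℝ → ℝ} (hf : ConcaveOn ℝ s f)
    {x y u w : ℝ} (hx : x ∈ s) (hy : y ∈ s) (hyu : y ≤ u) (hux : u ≤ x)
    (hsum : u + w = x + y) : f x + f y ≤ f u + f w := by
  rcases (hyu.trans hux).eq_or_lt with hxy | hxy
  · rw [show u = x by linarith, show w = x by linarith, hxy]
  set t := (u - y) / (x - y)
  have ht : t * (x - y) = u - y := div_mul_cancel₀ _ (sub_pos.2 hxy).ne'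
  have ht0 : 0 ≤ t := div_nonneg (sub_nonneg.2 hyu) (sub_pos.2 hxy).le
  have ht1 : t ≤ 1 := div_le_one_of_le₀ (by linarith) (sub_pos.2 hxy).le
  have hu := hf.2 hx hy ht0 (sub_nonneg.2 ht1) (add_sub_cancel t 1)
  have hw := hf.2 hx hy (sub_nonneg.2 ht1) ht0 (sub_add_cancel 1 t)
  simp only [smul_eq_mul] at hu hw
  rw [show t * x + (1 - t) * y = u by linear_combination ht] at hu
  rw [show (1 - t) * x + t * y = w by linear_combination -ht - hsum] at hw
  linarith

section ParetoProduct

variable {α c : ℝ}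

theorem lt_add_sub_mul_div_add {a b : ℝ} (ha : 0 < a) (hb : 0 < b) (hc : 0 < c) :
    (a + b) / (a + b + c) < a / (a + c) + b / (b + c) - a / (a + c) * (b / (b + c)) := by
  rw [div_lt_iff₀ (by positivity)]
  field_simp
  nlinarith [mul_pos (mul_pos ha hb) (mul_pos hc (add_pos (add_pos ha hb) hc))]

theorem one_sub_rpow_mul_one_sub_rpow_lt (hα0 : 0 < α) (hα1 : α ≤ 1) (hc : 0 < c)
    {a b : ℝ} (ha : 0 < a) (hb : 0 < b) :
    (1 - (a / (a + c)) ^ α) * (1 - (b / (b + c)) ^ α) < 1 - ((a + b) / (a + b + c)) ^ α := by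
  set u := a / (a + c)
  set w := b / (b + c)
  have hu0 : 0 < u := by positivity
  have hw0 : 0 < w := by positivity
  have hu1 : u < 1 := (div_lt_one (by positivity)).2 (by linarith)
  have hw1 : w < 1 := (div_lt_one (by positivity)).2 (by linarith)
  have hlt : ((a + b) / (a + b + c)) ^ α < (u + w - u * w) ^ α :=
    Real.rpow_lt_rpow (by positivity) (lt_add_sub_mul_div_add ha hb hc) hα0
  have hconc : (u + w - u * w) ^ α + (u * w) ^ α ≤ u ^ α + w ^ α :=
    (Real.concaveOn_rpow hα0.le hα1).map_add_map_le_of_add_eq (mem_Ici.2 (by nlinarith))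
      (mem_Ici.2 (by positivity)) (by nlinarith) (by nlinarith) (by ring)
  rw [Real.mul_rpow hu0.le hw0.le] at hconc
  linarith

theorem rpow_div_add_le_one (hα0 : 0 < α) (hc : 0 < c) {t : ℝ} (ht : 0 < t) :
    (t / (t + c)) ^ α ≤ 1 :=
  Real.rpow_le_one (by positivity) ((div_le_one (by positivity)).2 (by linarith)) hα0.le

variable {ι : Type*} {θ : ι → ℝ}

theorem prod_one_sub_rpow_le (hα0 : 0 < α) (hα1 : α ≤ 1) (hc : 0 < c) {s : Finset ι}
    (hs : s.Nonempty) (hθ : ∀ i ∈ s, 0 < θ i) :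
    ∏ i ∈ s, (1 - (θ i / (θ i + c)) ^ α) ≤ 1 - ((∑ i ∈ s, θ i) / (∑ i ∈ s, θ i + c)) ^ α := by
  induction hs using Finset.Nonempty.cons_induction with
  | singleton i => simp
  | cons a s ha hs ih =>
    rw [Finset.forall_mem_cons] at hθ
    rw [Finset.prod_cons, Finset.sum_cons]
    calc (1 - (θ a / (θ a + c)) ^ α) * ∏ i ∈ s, (1 - (θ i / (θ i + c)) ^ α)
        ≤ (1 - (θ a / (θ a + c)) ^ α) * (1 - ((∑ i ∈ s, θ i) / (∑ i ∈ s, θ i + c)) ^ α) :=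
          mul_le_mul_of_nonneg_left (ih hθ.2) (sub_nonneg.2 (rpow_div_add_le_one hα0 hc hθ.1))
      _ ≤ 1 - ((θ a + ∑ i ∈ s, θ i) / (θ a + ∑ i ∈ s, θ i + c)) ^ α :=
          (one_sub_rpow_mul_one_sub_rpow_lt hα0 hα1 hc hθ.1 (Finset.sum_pos hθ.2 hs)).le

theorem prod_one_sub_rpow_lt [DecidableEq ι] (hα0 : 0 < α) (hα1 : α ≤ 1) (hc : 0 < c)
    {s : Finset ι} (hs : 2 ≤ s.card) (hθ : ∀ i ∈ s, 0 < θ i) :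
    ∏ i ∈ s, (1 - (θ i / (θ i + c)) ^ α) < 1 - ((∑ i ∈ s, θ i) / (∑ i ∈ s, θ i + c)) ^ α := by
  obtain ⟨a, ha⟩ : s.Nonempty := Finset.card_pos.1 (by omega)
  have hrest : (s.erase a).Nonempty := by
    rw [← Finset.card_pos, Finset.card_erase_of_mem ha]; omega
  have hθa : 0 < θ a := hθ a ha
  have hθrest : ∀ i ∈ s.erase a, 0 < θ i := fun i hi => hθ i (Finset.mem_of_mem_erase hi)
  rw [← Finset.mul_prod_erase s _ ha, ← Finset.add_sum_erase s θ ha]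
  calc (1 - (θ a / (θ a + c)) ^ α) * ∏ i ∈ s.erase a, (1 - (θ i / (θ i + c)) ^ α)
      ≤ (1 - (θ a / (θ a + c)) ^ α)
          * (1 - ((∑ i ∈ s.erase a, θ i) / (∑ i ∈ s.erase a, θ i + c)) ^ α) :=
        mul_le_mul_of_nonneg_left (prod_one_sub_rpow_le hα0 hα1 hc hrest hθrest)
          (sub_nonneg.2 (rpow_div_add_le_one hα0 hc hθa))
    _ < 1 - ((θ a + ∑ i ∈ s.erase a, θ i) / (θ a + ∑ i ∈ s.erase a, θ i + c)) ^ α :=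
        one_sub_rpow_mul_one_sub_rpow_lt hα0 hα1 hc hθa (Finset.sum_pos hθrest hrest)

end ParetoProduct

theorem mul_sub_one_le_sum_mul_sub_one {ι : Type*} [Fintype ι] {θ x : ι → ℝ}
    (hθ : ∀ i, 0 ≤ θ i) (hsum : ∑ i, θ i = 1) (hx : ∀ i, 1 ≤ x i) (i : ι) :
    θ i * (x i - 1) ≤ ∑ j, θ j * x j - 1 :=
  calc θ i * (x i - 1) ≤ ∑ j, θ j * (x j - 1) :=
        Finset.single_le_sum (fun j _ => mul_nonneg (hθ j) (sub_nonneg.2 (hx j)))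
          (Finset.mem_univ i)
    _ = ∑ j, θ j * x j - 1 := by simp only [mul_sub, mul_one, Finset.sum_sub_distrib, hsum]

theorem lt_one_of_sum_eq_one {ι : Type*} [Fintype ι] (hcard : 2 ≤ Fintype.card ι) {θ : ι → ℝ}
    (hθ : ∀ i, 0 < θ i) (hsum : ∑ i, θ i = 1) (i : ι) : θ i < 1 := by
  classical
  obtain ⟨j, hji⟩ := Fintype.exists_ne_of_one_lt_card hcard i
  calc θ i < θ j + θ i := lt_add_of_pos_left _ (hθ j)
    _ = ∑ k ∈ {j, i}, θ k := (Finset.sum_pair hji).symm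
    _ ≤ ∑ k, θ k := Finset.sum_le_sum_of_subset_of_nonneg (Finset.subset_univ _)
        fun k _ _ => (hθ k).le
    _ = 1 := hsum

theorem sum_mul_min_le_iff {ι : Type*} [Fintype ι] {θ x c : ι → ℝ} {v t : ℝ}
    (hθ : ∀ i, 0 < θ i) (hθ1 : ∀ i, θ i < 1) (hsum : ∑ i, θ i = 1) (hx : ∀ i, 1 ≤ x i)
    (hv : 1 ≤ v) (hc : ∀ i, θ i * c i = v) (ht : t ≤ v) :
    ∑ i, θ i * min (x i) (c i) ≤ t ↔ ∑ i, θ i * x i ≤ t := by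
  have hsum_eq : (∀ i, x i ≤ c i) → ∑ i, θ i * min (x i) (c i) = ∑ i, θ i * x i :=
    fun h => Finset.sum_congr rfl fun i _ => by rw [min_eq_left (h i)]
  constructor
  · intro hT
    suffices h : ∀ i, x i ≤ c i by rwa [← hsum_eq h]
    intro i
    by_contra! hci
    have hc1 : ∀ j, 1 ≤ c j := fun j =>
      le_of_mul_le_mul_left (by linarith [hc j, hθ1 j] : θ j * 1 ≤ θ j * c j) (hθ j)
    have := mul_sub_one_le_sum_mul_sub_one (fun j => (hθ j).le) hsum
      (fun j => le_min (hx j) (hc1 j)) i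
    rw [min_eq_right hci.le] at this
    linarith [hc i, hθ1 i]
  · intro hS
    suffices h : ∀ i, x i ≤ c i by rwa [hsum_eq h]
    intro i
    refine le_of_mul_le_mul_left ?_ (hθ i)
    rw [hc i]
    exact (Finset.single_le_sum (fun j _ => mul_nonneg (hθ j).le (by linarith [hx j]))
      (Finset.mem_univ i)).trans (hS.trans ht)

section Pareto

variable {Ω : Type*} [MeasurableSpace Ω] {P : Measure Ω} [IsProbabilityMeasure P]
  {X : Ω → ℝ} {α p : ℝ}

theorem IsPareto.ae_one_le_s19 (h : IsPareto P X α) : ∀ᵐ ω ∂P, 1 ≤ X ω :=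
  (ae_iff_measure_eq (measurableSet_le measurable_const h.1).nullMeasurableSet).2
    (h.2.1.trans measure_univ.symm)

theorem IsPareto.measure_le (h : IsPareto P X α) {t : ℝ} (ht : 1 ≤ t) :
    P {ω | X ω ≤ t} = ENNReal.ofReal (1 - t ^ (-α)) := by
  have hcompl : {ω | X ω ≤ t} = {ω | t < X ω}ᶜ := by ext; simp
  rw [hcompl, prob_compl_eq_one_sub (measurableSet_lt measurable_const h.1), h.2.2 t ht,
    ← ENNReal.ofReal_one, ← ENNReal.ofReal_sub _ (by positivity)]

theorem IsPareto.VaR_le (h : IsPareto P X α) (hp0 : 0 < p) (hp1 : p < 1) {q : ℝ} (hq : 1 ≤ q)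
    (hpq : p ≤ 1 - q ^ (-α)) : VaR P X p ≤ q := by
  rw [VaR_le_iff h.1 hp0 hp1, h.measure_le hq]
  exact ENNReal.ofReal_le_ofReal hpq

theorem exists_one_lt_one_sub_rpow_neg_eq (hα : 0 < α) (hp0 : 0 < p) (hp1 : p < 1) :
    ∃ q : ℝ, 1 < q ∧ 1 - q ^ (-α) = p := by
  refine ⟨(1 - p) ^ (-α⁻¹), Real.one_lt_rpow_of_pos_of_lt_one_of_neg (by linarith) (by linarith)
    (neg_neg_of_pos (inv_pos.2 hα)), ?_⟩
  rw [← Real.rpow_mul (by linarith), neg_mul_neg, inv_mul_cancel₀ hα.ne', Real.rpow_one]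
  ring

theorem measure_sum_mul_le_lt {ι : Type*} [Fintype ι] (hcard : 2 ≤ Fintype.card ι)
    (hα0 : 0 < α) (hα1 : α ≤ 1) {X : ι → Ω → ℝ} (hX : ∀ i, IsPareto P (X i) α)
    (hind : iIndepFun X P) {θ : ι → ℝ} (hθ : ∀ i, 0 < θ i) (hsum : ∑ i, θ i = 1)
    {q : ℝ} (hq : 1 < q) :
    P {ω | ∑ i, θ i * X i ω ≤ q} < ENNReal.ofReal (1 - q ^ (-α)) := by
  classical
  set s : ι → ℝ := fun i => (θ i + (q - 1)) / θ i
  have hs1 : ∀ i, 1 ≤ s i := fun i => by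
    rw [le_div_iff₀ (hθ i)]
    linarith
  have hs : ∀ i, s i ^ (-α) = (θ i / (θ i + (q - 1))) ^ α := fun i => by
    rw [Real.rpow_neg (by linarith [hs1 i]), ← Real.inv_rpow (by linarith [hs1 i]), inv_div]
  have hs0 : ∀ i, 0 ≤ 1 - s i ^ (-α) := fun i =>
    sub_nonneg.2 (Real.rpow_le_one_of_one_le_of_nonpos (hs1 i) (by linarith))
  have hsub : {ω | ∑ i, θ i * X i ω ≤ q} ≤ᵐ[P] ⋂ i, {ω | X i ω ≤ s i} := by
    filter_upwards [ae_all_iff.2 fun i => (hX i).ae_one_le_s19] with ω hω hS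
    refine mem_iInter.2 fun i => ?_
    have := mul_sub_one_le_sum_mul_sub_one (fun j => (hθ j).le) hsum hω i
    show X i ω ≤ (θ i + (q - 1)) / θ i
    rw [le_div_iff₀ (hθ i)]
    linarith [show ∑ j, θ j * X j ω ≤ q from hS]
  have hprod : ∏ i, (1 - s i ^ (-α)) < 1 - q ^ (-α) := by
    have := prod_one_sub_rpow_lt hα0 hα1 (sub_pos.2 hq) (s := Finset.univ)
      (by rwa [Finset.card_univ]) (fun i _ => hθ i)
    rw [hsum, add_sub_cancel, one_div, Real.inv_rpow (by linarith),
      ← Real.rpow_neg (by linarith)] at this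
    simpa only [hs] using this
  calc P {ω | ∑ i, θ i * X i ω ≤ q} ≤ P (⋂ i, {ω | X i ω ≤ s i}) := measure_mono_ae hsub
    _ = ∏ i, P {ω | X i ω ≤ s i} := hind.meas_iInter fun i => ⟨Iic (s i), measurableSet_Iic, rfl⟩
    _ = ENNReal.ofReal (∏ i, (1 - s i ^ (-α))) := by
      rw [ENNReal.ofReal_prod_of_nonneg fun i _ => hs0 i]
      exact Finset.prod_congr rfl fun i _ => (hX i).measure_le (hs1 i)
    _ < ENNReal.ofReal (1 - q ^ (-α)) :=
      (ENNReal.ofReal_lt_ofReal_iff_of_nonneg (Finset.prod_nonneg fun i _ => hs0 i)).2 hprod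

end Pareto

/-- Per-loss capping at thresholds `cᵢ = VaR_p(∑ θⱼXⱼ)/θᵢ` preserves the VaR
diversification penalty: `VaR_p(∑ θᵢ min(Xᵢ,cᵢ)) = VaR_p(∑ θᵢXᵢ) > ∑ θᵢ VaR_p(min(Xᵢ,cᵢ))`. -/
theorem stmt19 {Ω : Type*} [MeasurableSpace Ω] (P : Measure Ω) [IsProbabilityMeasure P]
    (n : ℕ) (hn : 2 ≤ n) (α : ℝ) (hα : α ∈ Set.Ioc (0:ℝ) 1)
    (X : Fin n → Ω → ℝ) (hX : ∀ i, IsPareto P (X i) α)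
    (hind : iIndepFun X P)
    (θ : Fin n → ℝ) (hθ : ∀ i, 0 < θ i) (hsum : ∑ i, θ i = 1)
    (p : ℝ) (hp : p ∈ Set.Ioo (0:ℝ) 1)
    (c : Fin n → ℝ)
    (hc : ∀ i, c i = VaR P (fun ω => ∑ j, θ j * X j ω) p / θ i) :
    VaR P (fun ω => ∑ i, θ i * min (X i ω) (c i)) p
        = VaR P (fun ω => ∑ i, θ i * X i ω) p
    ∧ ∑ i, θ i * VaR P (fun ω => min (X i ω) (c i)) p
        < VaR P (fun ω => ∑ i, θ i * min (X i ω) (c i)) p := by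
  obtain ⟨hα0, hα1⟩ := hα
  obtain ⟨hp0, hp1⟩ := hp
  have hcard : 2 ≤ Fintype.card (Fin n) := by rwa [Fintype.card_fin]
  have hXm : ∀ i, Measurable (X i) := fun i => (hX i).1
  have hS : Measurable fun ω => ∑ i, θ i * X i ω := by fun_prop
  have hT : Measurable fun ω => ∑ i, θ i * min (X i ω) (c i) := by fun_prop
  set v := VaR P (fun ω => ∑ j, θ j * X j ω) p
  obtain ⟨q, hq1, hqp⟩ := exists_one_lt_one_sub_rpow_neg_eq hα0 hp0 hp1
  have hqv : q < v := by
    have := measure_sum_mul_le_lt hcard hα0 hα1 hX hind hθ hsum hq1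
    rw [hqp] at this
    exact lt_of_not_ge fun hvq => this.not_ge ((VaR_le_iff hS hp0 hp1).1 hvq)
  have hcv : ∀ i, θ i * c i = v := fun i => by rw [hc i, mul_div_cancel₀ _ (hθ i).ne']
  have hTS : VaR P (fun ω => ∑ i, θ i * min (X i ω) (c i)) p = v := by
    refine VaR_eq_of_measure_le_eq hT hS hp0 hp1 fun t ht => measure_congr ?_
    filter_upwards [ae_all_iff.2 fun i => (hX i).ae_one_le_s19] with ω hω
    exact propext (sum_mul_min_le_iff hθ (lt_one_of_sum_eq_one hcard hθ hsum) hsum hω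
      (by linarith) hcv ht)
  refine ⟨hTS, ?_⟩
  calc ∑ i, θ i * VaR P (fun ω => min (X i ω) (c i)) p ≤ ∑ i, θ i * q :=
        Finset.sum_le_sum fun i _ => mul_le_mul_of_nonneg_left
          ((VaR_mono (by fun_prop) (hXm i) hp0 hp1 fun ω => min_le_left _ _).trans
            ((hX i).VaR_le hp0 hp1 hq1.le hqp.ge)) (hθ i).le
    _ = q := by rw [← Finset.sum_mul, hsum, one_mul]
    _ < _ := hTS ▸ hqv
end
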